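/- The comultiplication Δ on the enveloping^{6-th} algebra U determined by Δ(q) = q⊗q and Δ(x) = (x + kqx − xq)⊗1 + 1⊗(x + kqx − xq) + (1−k)qx⊗q + (1−k)q⊗qx for x ∈ L is a well-defined algebra homomorphism U → U⊗U; i.e., Δ applied to the defining relation [x,y]^ − xy + yx + xyq − yxq − kxqy + kyqx vanishes in U⊗U. -/

import Mathlib

noncomputable section

/-- The free `K`-vector space on `X ⊕ {q̃}`. -/
abbrev FreeInvModule (K : Type*) [Field K] (X : Type*) : Type _ := (X ⊕ Unit) →₀ K

/-- The generator `q̃` inside the tensor algebra `T(V)`. -/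
def qTilde (K : Type*) [Field K] (X : Type*) : TensorAlgebra K (FreeInvModule K X) :=
  TensorAlgebra.ι K (Finsupp.single (Sum.inr ()) 1)

/-- The relations generating the ideal `I`: `q̃⊗q̃ = q̃` and `q̃⊗a⊗q̃ = q̃⊗a` for all `a`. -/
inductive InvRel (K : Type*) [Field K] (X : Type*) :
    TensorAlgebra K (FreeInvModule K X) → TensorAlgebra K (FreeInvModule K X) → Prop
  | idem : InvRel K X (qTilde K X * qTilde K X) (qTilde K X)
  | inv (a : TensorAlgebra K (FreeInvModule K X)) :
      InvRel K X (qTilde K X * a * qTilde K X) (qTilde K X * a)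

/-- The free invariant algebra `Â = T(V)/I`. -/
abbrev FreeInvAlg (K : Type*) [Field K] (X : Type*) : Type _ := RingQuot (InvRel K X)

/-- `q̂ = q̃ + I`. -/
def qHat (K : Type*) [Field K] (X : Type*) : FreeInvAlg K X :=
  RingQuot.mkAlgHom K (InvRel K X) (qTilde K X)

variable (K : Type*) [Field K]

/-- The linear embedding `L → Â` extending `î` on the basis `X = {x_j}`. -/
def lHat (J : Type*) (L : Type*) [AddCommGroup L] [Module K L] (b : Module.Basis J K L) :
    L →ₗ[K] FreeInvAlg K J :=
  (RingQuot.mkAlgHom K (InvRel K J)).toLinearMap ∘ₗ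
    (TensorAlgebra.ι K (M := FreeInvModule K J)) ∘ₗ
      (Finsupp.lmapDomain K K Sum.inl) ∘ₗ b.repr.toLinearMap

/-- The relations generating the ideal `R`:
`[x,y]^ = x̂ŷ - ŷx̂ - x̂ŷq̂ + ŷx̂q̂ + k x̂q̂ŷ - k ŷq̂x̂` for all `x, y ∈ L`. -/
inductive LieRel (J : Type*) (L : Type*) [LieRing L] [LieAlgebra K L]
    (b : Module.Basis J K L) (c : K) : FreeInvAlg K J → FreeInvAlg K J → Prop
  | rel (x y : L) : LieRel J L b c (lHat K J L b ⁅x, y⁆)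
      (lHat K J L b x * lHat K J L b y - lHat K J L b y * lHat K J L b x
        - lHat K J L b x * lHat K J L b y * qHat K J
        + lHat K J L b y * lHat K J L b x * qHat K J
        + c • (lHat K J L b x * qHat K J * lHat K J L b y)
        - c • (lHat K J L b y * qHat K J * lHat K J L b x))

/-- The enveloping⁶ᵗʰ algebra `U = Â/R`. -/
abbrev EnvLie (J : Type*) (L : Type*) [LieRing L] [LieAlgebra K L]
    (b : Module.Basis J K L) (c : K) : Type _ := RingQuot (LieRel K J L b c)

/-- `q̄ = q̂ + R`. -/
def qBar (J : Type*) (L : Type*) [LieRing L] [LieAlgebra K L]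
    (b : Module.Basis J K L) (c : K) : EnvLie K J L b c :=
  RingQuot.mkAlgHom K (LieRel K J L b c) (qHat K J)

/-- The canonical linear map `i : L → U`, `i(x) = x̂ + R`. -/
def iEnv (J : Type*) (L : Type*) [LieRing L] [LieAlgebra K L]
    (b : Module.Basis J K L) (c : K) : L →ₗ[K] EnvLie K J L b c :=
  (RingQuot.mkAlgHom K (LieRel K J L b c)).toLinearMap ∘ₗ lHat K J L b

open scoped TensorProduct

/-!
The computation works in any algebra `A` with an element `q` such that `q w q = q w`.
There the twist `s a = a + c q a - a q` sends the right-hand side `qBracket c q u v` of the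
defining relation to the commutator `⁅s u, s v⁆`, and `q · qBracket c q u v = c q ⁅u, v⁆`.
Write `Δ a = P (s a) + (1 - c) E a` with `P a = a ⊗ 1 + 1 ⊗ a` and `E a = q a ⊗ q + q ⊗ q a`
(`primTensor`, `qTensor`).
Both `P` and `E` preserve commutators, the mixed products satisfy
`P (s a) · E b = E a · P (s b) = c · E a · E b`, and `Q = q ⊗ q` satisfies
`Δ a · Q = Q · Δ a = E a`. Hence
`qBracket c Q (Δ u) (Δ v) = P ⁅s u, s v⁆ + c (1 - c) E ⁅u, v⁆ = Δ (qBracket c q u v)`.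
Since `Q w Q = Q w` holds again in `A ⊗ A`, `Δ` also respects the relations of the free
invariant algebra, so it descends to `U`.
-/

section RightAbsorbing

variable {R A : Type*} [CommSemiring R] [Semiring A] [Algebra R A]

def IsRightAbsorbing (q : A) : Prop := ∀ w : A, q * w * q = q * w

namespace IsRightAbsorbing

variable {q : A} (hq : IsRightAbsorbing q)
include hq

lemma mul_self : q * q = q := by simpa using hq 1

lemma mul_mul_self (w : A) : q * (q * w) = q * w := by rw [← mul_assoc, hq.mul_self]

lemma mul_mul_right (a : A) : q * (a * q) = q * a := by rw [← mul_assoc, hq]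

lemma mul_mul_mul_self (a w : A) : q * (a * (q * w)) = q * (a * w) := by
  rw [← mul_assoc, ← mul_assoc, hq, mul_assoc]

lemma mul_mul_mul_right (a b : A) : q * (a * (b * q)) = q * (a * b) := by
  rw [← mul_assoc, ← mul_assoc, mul_assoc q, hq]

lemma tmul_self : IsRightAbsorbing (q ⊗ₜ[R] q) := by
  intro w
  induction w using TensorProduct.induction_on with
  | zero => simp
  | tmul a a' =>
    rw [Algebra.TensorProduct.tmul_mul_tmul, Algebra.TensorProduct.tmul_mul_tmul, hq a, hq a']
  | add x y hx hy => simp only [mul_add, add_mul, hx, hy]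

end IsRightAbsorbing

end RightAbsorbing

section Twist

variable {R A : Type*} [CommRing R] [Ring A] [Algebra R A]

def qBracket (c : R) (q u v : A) : A :=
  u * v - v * u - u * v * q + v * u * q + c • (u * q * v) - c • (v * q * u)

lemma AlgHom.map_qBracket {B : Type*} [Ring B] [Algebra R B] (f : A →ₐ[R] B)
    (c : R) (q u v : A) :
    f (qBracket c q u v) = qBracket c (f q) (f u) (f v) := by
  simp only [qBracket, map_sub, map_add, map_mul, map_smul]

def twistMap (c : R) (q : A) : A →ₗ[R] A :=
  LinearMap.id + c • LinearMap.mulLeft R q - LinearMap.mulRight R q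

@[simp]
lemma twistMap_apply (c : R) (q a : A) : twistMap c q a = a + c • (q * a) - a * q := rfl

variable (c : R) {q : A} (hq : IsRightAbsorbing q)
include hq

lemma mul_twistMap (a : A) : q * twistMap c q a = c • (q * a) := by
  simp only [twistMap_apply, mul_sub, mul_add, mul_smul_comm, hq.mul_mul_self, hq.mul_mul_right]
  abel

lemma twistMap_mul (a : A) : twistMap c q a * q = c • (q * a) := by
  simp only [twistMap_apply, sub_mul, add_mul, smul_mul_assoc, mul_assoc, hq.mul_self,
    hq.mul_mul_right]
  abel

lemma twistMap_mul_mul (a b : A) : twistMap c q a * (q * b) = c • (q * (a * b)) := by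
  rw [← mul_assoc, twistMap_mul c hq, smul_mul_assoc, mul_assoc]

lemma mul_mul_twistMap (a b : A) : q * a * twistMap c q b = c • (q * (a * b)) := by
  simp only [twistMap_apply, mul_sub, mul_add, mul_smul_comm, mul_assoc, hq.mul_mul_mul_self,
    hq.mul_mul_mul_right]
  abel

lemma mul_qBracket (u v : A) : q * qBracket c q u v = c • (q * ⁅u, v⁆) := by
  simp only [qBracket, Ring.lie_def, mul_sub, mul_add, mul_smul_comm, mul_assoc,
    hq.mul_mul_mul_self, hq.mul_mul_mul_right]
  module

lemma twistMap_qBracket (u v : A) :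
    twistMap c q (qBracket c q u v) = ⁅twistMap c q u, twistMap c q v⁆ := by
  simp only [qBracket, twistMap_apply, Ring.lie_def, mul_sub, mul_add, sub_mul, add_mul,
    mul_smul_comm, smul_mul_assoc, mul_assoc, hq.mul_self, hq.mul_mul_self,
    hq.mul_mul_right, hq.mul_mul_mul_self, hq.mul_mul_mul_right]
  module

end Twist

section Tensor

variable (R : Type*) {A : Type*} [CommRing R] [Ring A] [Algebra R A]

open TensorProduct

def primTensor : A →ₗ[R] A ⊗[R] A :=
  (TensorProduct.mk R A A).flip 1 + TensorProduct.mk R A A 1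

def qTensor (q : A) : A →ₗ[R] A ⊗[R] A :=
  ((TensorProduct.mk R A A).flip q + TensorProduct.mk R A A q) ∘ₗ LinearMap.mulLeft R q

variable {R}

def comulMap (c : R) (q : A) : A →ₗ[R] A ⊗[R] A :=
  primTensor R ∘ₗ twistMap c q + (1 - c) • qTensor R q

@[simp]
lemma primTensor_apply (a : A) : primTensor R a = a ⊗ₜ 1 + 1 ⊗ₜ a := rfl

@[simp]
lemma qTensor_apply (q a : A) : qTensor R q a = (q * a) ⊗ₜ q + q ⊗ₜ (q * a) := rfl

lemma lie_primTensor (a b : A) : ⁅primTensor R a, primTensor R b⁆ = primTensor R ⁅a, b⁆ := by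
  simp only [primTensor_apply, Ring.lie_def, add_mul, mul_add,
    Algebra.TensorProduct.tmul_mul_tmul, mul_one, one_mul, sub_tmul, tmul_sub]
  abel

lemma qTensor_eq_mul_primTensor (q a : A) : qTensor R q a = q ⊗ₜ q * primTensor R a := by
  simp [mul_add]

lemma comulMap_eq (c : R) (q a : A) :
    comulMap c q a = primTensor R (twistMap c q a) + (1 - c) • qTensor R q a := rfl

lemma comulMap_apply (c : R) (q a : A) :
    comulMap c q a = twistMap c q a ⊗ₜ[R] 1 + 1 ⊗ₜ[R] twistMap c q a
      + (1 - c) • ((q * a) ⊗ₜ[R] q) + (1 - c) • (q ⊗ₜ[R] (q * a)) := by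
  rw [comulMap_eq, primTensor_apply, qTensor_apply, smul_add, ← add_assoc]

variable (c : R) {q : A} (hq : IsRightAbsorbing q)
include hq

lemma qTensor_mul_qTensor (a b : A) : qTensor R q a * qTensor R q b =
    qTensor R q (a * b) + ((q * a) ⊗ₜ (q * b) + (q * b) ⊗ₜ (q * a)) := by
  simp only [qTensor_apply, add_mul, mul_add, Algebra.TensorProduct.tmul_mul_tmul, mul_assoc,
    hq.mul_self, hq.mul_mul_self, hq.mul_mul_right, hq.mul_mul_mul_self]
  abel

lemma lie_qTensor (a b : A) : ⁅qTensor R q a, qTensor R q b⁆ = qTensor R q ⁅a, b⁆ := by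
  rw [Ring.lie_def, qTensor_mul_qTensor hq, qTensor_mul_qTensor hq, Ring.lie_def, map_sub]
  abel

lemma primTensor_twistMap_mul_qTensor (a b : A) :
    primTensor R (twistMap c q a) * qTensor R q b = c • (qTensor R q a * qTensor R q b) := by
  rw [qTensor_mul_qTensor hq]
  simp only [primTensor_apply, qTensor_apply, add_mul, mul_add,
    Algebra.TensorProduct.tmul_mul_tmul, one_mul, twistMap_mul_mul c hq, twistMap_mul c hq,
    smul_add, smul_tmul', tmul_smul]
  abel

lemma qTensor_mul_primTensor_twistMap (a b : A) :
    qTensor R q a * primTensor R (twistMap c q b) = c • (qTensor R q a * qTensor R q b) := by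
  rw [qTensor_mul_qTensor hq]
  simp only [primTensor_apply, qTensor_apply, add_mul, mul_add,
    Algebra.TensorProduct.tmul_mul_tmul, mul_one, mul_mul_twistMap c hq, mul_twistMap c hq,
    smul_add, smul_tmul', tmul_smul]
  abel

lemma comulMap_mul_comulMap (a b : A) : comulMap c q a * comulMap c q b =
    primTensor R (twistMap c q a) * primTensor R (twistMap c q b)
      + (1 - c ^ 2) • (qTensor R q a * qTensor R q b) := by
  simp only [comulMap_eq, add_mul, mul_add, smul_mul_assoc, mul_smul_comm,
    primTensor_twistMap_mul_qTensor c hq, qTensor_mul_primTensor_twistMap c hq, smul_smul]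
  module

lemma qTensor_mul_tmul (a : A) : qTensor R q a * q ⊗ₜ q = qTensor R q a := by
  rw [qTensor_eq_mul_primTensor, hq.tmul_self]

lemma tmul_mul_qTensor (a : A) : q ⊗ₜ q * qTensor R q a = qTensor R q a := by
  rw [qTensor_eq_mul_primTensor, ← mul_assoc, hq.tmul_self.mul_self]

lemma comulMap_mul_tmul (a : A) : comulMap c q a * q ⊗ₜ q = qTensor R q a := by
  rw [comulMap_eq, add_mul, smul_mul_assoc, qTensor_mul_tmul hq]
  simp only [primTensor_apply, qTensor_apply, add_mul, Algebra.TensorProduct.tmul_mul_tmul,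
    one_mul, twistMap_mul c hq, ← smul_tmul', tmul_smul, smul_add]
  module

lemma tmul_mul_comulMap (a : A) : q ⊗ₜ q * comulMap c q a = qTensor R q a := by
  rw [comulMap_eq, mul_add, mul_smul_comm, tmul_mul_qTensor hq]
  simp only [primTensor_apply, qTensor_apply, mul_add, Algebra.TensorProduct.tmul_mul_tmul,
    mul_one, mul_twistMap c hq, ← smul_tmul', tmul_smul, smul_add]
  module

lemma qTensor_qBracket (u v : A) :
    qTensor R q (qBracket c q u v) = c • qTensor R q ⁅u, v⁆ := by
  rw [qTensor_apply, qTensor_apply, mul_qBracket c hq, ← smul_tmul', tmul_smul, smul_add]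

lemma comulMap_mul_qTensor (a b : A) :
    comulMap c q a * qTensor R q b = qTensor R q a * qTensor R q b := by
  calc comulMap c q a * qTensor R q b = comulMap c q a * (q ⊗ₜ q * qTensor R q b) := by
        rw [tmul_mul_qTensor hq]
    _ = qTensor R q a * qTensor R q b := by rw [← mul_assoc, comulMap_mul_tmul c hq]

lemma qTensor_mul_comulMap (a b : A) :
    qTensor R q a * comulMap c q b = qTensor R q a * qTensor R q b := by
  calc qTensor R q a * comulMap c q b = qTensor R q a * q ⊗ₜ q * comulMap c q b := by
        rw [qTensor_mul_tmul hq]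
    _ = qTensor R q a * qTensor R q b := by rw [mul_assoc, tmul_mul_comulMap c hq]

lemma comulMap_qBracket (u v : A) :
    comulMap c q (qBracket c q u v) =
      qBracket c (q ⊗ₜ[R] q) (comulMap c q u) (comulMap c q v) := by
  rw [comulMap_eq, twistMap_qBracket c hq, qTensor_qBracket c hq, ← lie_primTensor,
    ← lie_qTensor hq]
  simp only [qBracket, mul_assoc, comulMap_mul_tmul c hq, comulMap_mul_qTensor c hq,
    qTensor_mul_comulMap c hq]
  simp only [comulMap_mul_comulMap c hq, Ring.lie_def]
  module

end Tensor

namespace FreeInvAlg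

variable {K} {J B : Type*} [Semiring B] [Algebra K B] (Q : B) (hQ : IsRightAbsorbing Q)
  (f : J → B)

def liftTensor : TensorAlgebra K (FreeInvModule K J) →ₐ[K] B :=
  TensorAlgebra.lift K (Finsupp.linearCombination K (Sum.elim f fun _ => Q))

lemma liftTensor_qTilde : liftTensor Q f (qTilde K J) = Q := by
  simp [liftTensor, qTilde]

include hQ in
lemma liftTensor_respects ⦃x y⦄ (h : InvRel K J x y) : liftTensor Q f x = liftTensor Q f y := by
  cases h with
  | idem => rw [map_mul, liftTensor_qTilde, hQ.mul_self]
  | inv a => rw [map_mul, map_mul, liftTensor_qTilde, hQ]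

def lift : FreeInvAlg K J →ₐ[K] B :=
  RingQuot.liftAlgHom K ⟨liftTensor Q f, liftTensor_respects Q hQ f⟩

lemma lift_qHat : lift Q hQ f (qHat K J) = Q := by
  rw [lift, qHat, RingQuot.liftAlgHom_mkAlgHom_apply, liftTensor_qTilde]

lemma lift_lHat {L : Type*} [AddCommGroup L] [Module K L] (b : Module.Basis J K L)
    (g : L →ₗ[K] B) (x : L) : lift Q hQ (fun j => g (b j)) (lHat K J L b x) = g x := by
  suffices (lift Q hQ fun j => g (b j)).toLinearMap ∘ₗ lHat K J L b = g from
    LinearMap.congr_fun this x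
  refine b.ext fun j => ?_
  simp [lift, lHat, liftTensor]

end FreeInvAlg

namespace EnvLie

variable {K} {J L : Type*} [LieRing L] [LieAlgebra K L] (b : Module.Basis J K L) (c : K)

lemma qBar_isRightAbsorbing : IsRightAbsorbing (qBar K J L b c) := by
  intro u
  obtain ⟨a, rfl⟩ := RingQuot.mkAlgHom_surjective K (LieRel K J L b c) u
  obtain ⟨t, rfl⟩ := RingQuot.mkAlgHom_surjective K (InvRel K J) a
  have h := RingQuot.mkAlgHom_rel K (InvRel.inv (K := K) (X := J) t)
  simp only [qBar, qHat, ← map_mul, h]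

lemma iEnv_lie (x y : L) : iEnv K J L b c ⁅x, y⁆ =
    qBracket c (qBar K J L b c) (iEnv K J L b c x) (iEnv K J L b c y) :=
  (RingQuot.mkAlgHom_rel K (LieRel.rel (b := b) (c := c) x y)).trans
    ((RingQuot.mkAlgHom K _).map_qBracket c _ _ _)

-- Instance search does not find this on its own: it cannot recover the `Ring` instances of the
-- factors from the `RingQuot.instAddCommMonoid` over which the tensor product is formed.
instance : Ring (EnvLie K J L b c ⊗[K] EnvLie K J L b c) :=
  Algebra.TensorProduct.instRing (A := EnvLie K J L b c) (B := EnvLie K J L b c)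

def comulLift : FreeInvAlg K J →ₐ[K] EnvLie K J L b c ⊗[K] EnvLie K J L b c :=
  FreeInvAlg.lift _ (qBar_isRightAbsorbing b c).tmul_self
    fun j => (comulMap c (qBar K J L b c) ∘ₗ iEnv K J L b c) (b j)

lemma comulLift_qHat : comulLift b c (qHat K J) = qBar K J L b c ⊗ₜ qBar K J L b c :=
  FreeInvAlg.lift_qHat _ _ _

lemma comulLift_lHat (x : L) :
    comulLift b c (lHat K J L b x) = comulMap c (qBar K J L b c) (iEnv K J L b c x) :=
  FreeInvAlg.lift_lHat _ _ b _ x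

lemma comulLift_respects ⦃a a' : FreeInvAlg K J⦄ (h : LieRel K J L b c a a') :
    comulLift b c a = comulLift b c a' := by
  obtain ⟨x, y⟩ := h
  change _ = comulLift b c (qBracket c (qHat K J) (lHat K J L b x) (lHat K J L b y))
  rw [AlgHom.map_qBracket, comulLift_qHat, comulLift_lHat, comulLift_lHat, comulLift_lHat,
    iEnv_lie, comulMap_qBracket c (qBar_isRightAbsorbing b c)]

def comul : EnvLie K J L b c →ₐ[K] EnvLie K J L b c ⊗[K] EnvLie K J L b c :=
  RingQuot.liftAlgHom K ⟨comulLift b c, comulLift_respects b c⟩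

lemma comul_qBar : comul b c (qBar K J L b c) = qBar K J L b c ⊗ₜ qBar K J L b c :=
  (RingQuot.liftAlgHom_mkAlgHom_apply K _ _ _).trans (comulLift_qHat b c)

lemma comul_iEnv (x : L) :
    comul b c (iEnv K J L b c x) = comulMap c (qBar K J L b c) (iEnv K J L b c x) :=
  (RingQuot.liftAlgHom_mkAlgHom_apply K _ _ _).trans (comulLift_lHat b c x)

end EnvLie

theorem envLie_comultiplication (J : Type*) (L : Type*) [LieRing L] [LieAlgebra K L]
    (b : Module.Basis J K L) (c : K) :
    ∃ Δ : EnvLie K J L b c →ₐ[K] (EnvLie K J L b c ⊗[K] EnvLie K J L b c),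
      (Δ (qBar K J L b c) = qBar K J L b c ⊗ₜ[K] qBar K J L b c) ∧
      (∀ x : L,
        Δ (iEnv K J L b c x) =
          (iEnv K J L b c x + c • (qBar K J L b c * iEnv K J L b c x)
              - iEnv K J L b c x * qBar K J L b c) ⊗ₜ[K] (1 : EnvLie K J L b c)
          + (1 : EnvLie K J L b c) ⊗ₜ[K]
              (iEnv K J L b c x + c • (qBar K J L b c * iEnv K J L b c x)
                - iEnv K J L b c x * qBar K J L b c)
          + (1 - c) • ((qBar K J L b c * iEnv K J L b c x) ⊗ₜ[K] qBar K J L b c)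
          + (1 - c) • (qBar K J L b c ⊗ₜ[K] (qBar K J L b c * iEnv K J L b c x))) :=
  ⟨EnvLie.comul b c, EnvLie.comul_qBar b c, fun x => by
    rw [EnvLie.comul_iEnv, comulMap_apply, twistMap_apply]⟩
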